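/- arXiv:2509.08704 — 4 statements merged into one kernel-verified Lean document; each statement's English description precedes it below -/
import Mathlib

section
/- The trade-off function for distinguishing Lap(0,1) from Lap(μ,1) (μ > 0) is given piecewise by: 1 − e^μ x for x < e^{−μ}/2; e^{−μ}/(4x) for e^{−μ}/2 ≤ x ≤ 1/2; and e^{−μ}(1−x) for x > 1/2. -/
open MeasureTheory Set

/-- The Laplace distribution with mean `m` and scale `1`, given by the density
`(1/2) * exp (-|x - m|)` with respect to Lebesgue measure. -/
noncomputable def laplaceMeasure (m : ℝ) : Measure ℝ :=
  volume.withDensity (fun x => ENNReal.ofReal ((1/2) * Real.exp (-|x - m|)))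


open scoped ENNReal NNReal


noncomputable def lapd (m x : ℝ) : ℝ := (1/2) * Real.exp (-|x - m|)

lemma lapd_pos (m x : ℝ) : 0 < lapd m x := by
  have := Real.exp_pos (-|x - m|); unfold lapd; linarith

lemma lapd_meas (m : ℝ) : Measurable (lapd m) := by
  unfold lapd; fun_prop

lemma integrableOn_exp_neg_Ioi' (c : ℝ) : IntegrableOn (fun x => Real.exp (-x)) (Ioi c) := by
  rw [← Measure.map_neg_eq_self (volume : Measure ℝ)]
  have m : MeasurableEmbedding fun x : ℝ => -x := (Homeomorph.neg ℝ).measurableEmbedding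
  rw [m.integrableOn_map_iff]
  simp_rw [Function.comp_def, neg_neg, neg_preimage, neg_Ioi]
  exact (integrableOn_exp_Iic _).mono Iio_subset_Iic_self le_rfl

lemma lapd_eq_left {m x : ℝ} (h : x ≤ m) : lapd m x = (1/2) * Real.exp (-m) * Real.exp x := by
  have : |x - m| = m - x := by rw [abs_of_nonpos (by linarith)]; ring
  rw [lapd, this, show -(m - x) = x + -m by ring, Real.exp_add]; ring

lemma lapd_eq_right {m x : ℝ} (h : m ≤ x) : lapd m x = (1/2) * Real.exp m * Real.exp (-x) := by
  have : |x - m| = x - m := by rw [abs_of_nonneg (by linarith)]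
  rw [lapd, this, show -(x - m) = m + -x by ring, Real.exp_add]; ring

lemma integrable_lapd (m : ℝ) : Integrable (lapd m) := by
  rw [← integrableOn_univ, ← Iic_union_Ioi (a := m)]
  apply IntegrableOn.union
  · exact IntegrableOn.congr_fun ((integrableOn_exp_Iic m).const_mul ((1/2) * Real.exp (-m)))
      (fun x hx => (lapd_eq_left hx).symm) measurableSet_Iic
  · exact IntegrableOn.congr_fun ((integrableOn_exp_neg_Ioi' m).const_mul ((1/2) * Real.exp m))
      (fun x hx => (lapd_eq_right (le_of_lt hx)).symm) measurableSet_Ioi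

lemma integral_Iio_lapd {m t : ℝ} (h : t ≤ m) :
    ∫ x in Iio t, lapd m x = (1/2) * Real.exp (t - m) := by
  rw [setIntegral_congr_set Iio_ae_eq_Iic,
    setIntegral_congr_fun measurableSet_Iic (g := fun x => (1/2) * Real.exp (-m) * Real.exp x)
      (fun x hx => lapd_eq_left (le_trans hx h)),
    integral_const_mul, integral_exp_Iic, Real.exp_sub]
  field_simp [Real.exp_neg]
  rw [← Real.exp_add]; simp

lemma integral_Ici_lapd {m t : ℝ} (h : m ≤ t) :
    ∫ x in Ici t, lapd m x = (1/2) * Real.exp (m - t) := by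
  rw [← setIntegral_congr_set Ioi_ae_eq_Ici,
    setIntegral_congr_fun measurableSet_Ioi (g := fun x => (1/2) * Real.exp m * Real.exp (-x))
      (fun x hx => lapd_eq_right (le_trans h (le_of_lt hx))),
    integral_const_mul, integral_exp_neg_Ioi, Real.exp_sub]
  field_simp [Real.exp_neg]
  rw [← Real.exp_add]; simp

lemma integral_lapd (m : ℝ) : ∫ x, lapd m x = 1 := by
  rw [← intervalIntegral.integral_Iio_add_Ici (b := m)
      ((integrable_lapd m).integrableOn) ((integrable_lapd m).integrableOn),
    integral_Iio_lapd (le_refl m), integral_Ici_lapd (le_refl m)]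
  norm_num

lemma integral_Iio_lapd' {m t : ℝ} (h : m ≤ t) :
    ∫ x in Iio t, lapd m x = 1 - (1/2) * Real.exp (m - t) := by
  have := intervalIntegral.integral_Iio_add_Ici (b := t)
      ((integrable_lapd m).integrableOn) ((integrable_lapd m).integrableOn)
  rw [integral_lapd, integral_Ici_lapd h] at this
  linarith

lemma integral_Ici_lapd' {m t : ℝ} (h : t ≤ m) :
    ∫ x in Ici t, lapd m x = 1 - (1/2) * Real.exp (t - m) := by
  have := intervalIntegral.integral_Iio_add_Ici (b := t)
      ((integrable_lapd m).integrableOn) ((integrable_lapd m).integrableOn)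
  rw [integral_lapd, integral_Iio_lapd h] at this
  linarith

lemma integral_laplace (m : ℝ) (g : ℝ → ℝ) :
    ∫ y, g y ∂(laplaceMeasure m) = ∫ y, g y * lapd m y := by
  have hm : Measurable fun x => (lapd m x).toNNReal := (lapd_meas m).real_toNNReal
  rw [laplaceMeasure,
    show (fun x => ENNReal.ofReal ((1/2) * Real.exp (-|x - m|)))
      = fun x => ((lapd m x).toNNReal : ℝ≥0∞) from rfl,
    integral_withDensity_eq_integral_smul hm]
  congr 1; funext y
  rw [NNReal.smul_def, Real.coe_toNNReal _ (lapd_pos m y).le, smul_eq_mul, mul_comm]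

lemma integrable_mul_lapd {m : ℝ} {R : ℝ → ℝ} (hR : Measurable R) (hb : ∀ y, |R y| ≤ 1) :
    Integrable (fun y => R y * lapd m y) := by
  refine (integrable_lapd m).mono' ((hR.mul (lapd_meas m)).aestronglyMeasurable) ?_
  filter_upwards with y
  rw [Real.norm_eq_abs, abs_mul, abs_of_pos (lapd_pos m y)]
  calc |R y| * lapd m y ≤ 1 * lapd m y :=
        mul_le_mul_of_nonneg_right (hb y) (lapd_pos m y).le
    _ = lapd m y := one_mul _

lemma lapd_ratio {μ a y : ℝ} (h : |y| - |y - μ| ≤ a) : lapd μ y ≤ Real.exp a * lapd 0 y := by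
  have h2 : Real.exp (-|y - μ|) ≤ Real.exp a * Real.exp (-|y|) := by
    rw [← Real.exp_add]; exact Real.exp_le_exp.mpr (by linarith)
  unfold lapd
  rw [sub_zero]
  linarith

lemma lapd_ratio' {μ a y : ℝ} (h : a ≤ |y| - |y - μ|) : Real.exp a * lapd 0 y ≤ lapd μ y := by
  have h2 : Real.exp a * Real.exp (-|y|) ≤ Real.exp (-|y - μ|) := by
    rw [← Real.exp_add]; exact Real.exp_le_exp.mpr (by linarith)
  unfold lapd
  rw [sub_zero]
  linarith

lemma lapd_le_exp_mul (μ y : ℝ) (hμ : 0 ≤ μ) : lapd μ y ≤ Real.exp μ * lapd 0 y := by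
  apply lapd_ratio
  have := abs_sub_abs_le_abs_sub y (y - μ)
  simp only [sub_sub_cancel] at this
  rwa [abs_of_nonneg hμ] at this

lemma exp_neg_mul_le_lapd (μ y : ℝ) (hμ : 0 ≤ μ) : Real.exp (-μ) * lapd 0 y ≤ lapd μ y := by
  apply lapd_ratio'
  have := abs_sub_abs_le_abs_sub (y - μ) y
  simp only [sub_sub_cancel_left] at this
  rw [abs_neg] at this
  rw [abs_of_nonneg hμ] at this
  linarith

lemma lapd_le_k {μ t y : ℝ} (ht0 : 0 ≤ t) (htμ : t ≤ μ) (hy : y ≤ t) :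
    lapd μ y ≤ Real.exp (2*t - μ) * lapd 0 y := by
  apply lapd_ratio
  have h1 : |y - μ| = μ - y := by rw [abs_of_nonpos (by linarith)]; ring
  rcases abs_cases y with ⟨h2, _⟩ | ⟨h2, _⟩ <;> rw [h1] <;> linarith [h2]

lemma k_le_lapd {μ t y : ℝ} (ht0 : 0 ≤ t) (htμ : t ≤ μ) (hy : t ≤ y) :
    Real.exp (2*t - μ) * lapd 0 y ≤ lapd μ y := by
  apply lapd_ratio'
  have h2 : |y| = y := abs_of_nonneg (by linarith)
  rcases abs_cases (y - μ) with ⟨h1, _⟩ | ⟨h1, _⟩ <;> linarith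

section LB
variable {μ t α : ℝ} {R : ℝ → ℝ}

lemma abs_le_one_of_Icc (hb : ∀ y, R y ∈ Icc (0:ℝ) 1) : ∀ y, |R y| ≤ 1 :=
  fun y => by rw [abs_of_nonneg (hb y).1]; exact (hb y).2

lemma abs_one_sub_le_one (hb : ∀ y, R y ∈ Icc (0:ℝ) 1) : ∀ y, |1 - R y| ≤ 1 :=
  fun y => by rw [abs_of_nonneg (by linarith [(hb y).2])]; linarith [(hb y).1]

lemma integrable_R_lapd (m : ℝ) (hR : Measurable R) (hb : ∀ y, R y ∈ Icc (0:ℝ) 1) :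
    Integrable (fun y => R y * lapd m y) :=
  integrable_mul_lapd hR (abs_le_one_of_Icc hb)

lemma integrable_oneSubR_lapd (m : ℝ) (hR : Measurable R) (hb : ∀ y, R y ∈ Icc (0:ℝ) 1) :
    Integrable (fun y => (1 - R y) * lapd m y) :=
  integrable_mul_lapd (measurable_const.sub hR) (abs_one_sub_le_one hb)

lemma one_sub_integral (m : ℝ) (hR : Measurable R) (hb : ∀ y, R y ∈ Icc (0:ℝ) 1) :
    ∫ y, (1 - R y) * lapd m y = 1 - ∫ y, R y * lapd m y := by
  have : (fun y => (1 - R y) * lapd m y) = fun y => lapd m y - R y * lapd m y := by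
    funext y; ring
  rw [this, integral_sub (integrable_lapd m) (integrable_R_lapd m hR hb), integral_lapd]

lemma lb1 (hμ : 0 ≤ μ) (hR : Measurable R) (hb : ∀ y, R y ∈ Icc (0:ℝ) 1)
    (hα : ∫ y, R y * lapd 0 y ≤ α) :
    1 - Real.exp μ * α ≤ ∫ y, (1 - R y) * lapd μ y := by
  rw [one_sub_integral μ hR hb]
  have key : ∫ y, R y * lapd μ y ≤ Real.exp μ * α := by
    have e1 : (fun y => Real.exp μ * (R y * lapd 0 y)) = fun y => R y * (Real.exp μ * lapd 0 y) := by
      funext y; ring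
    calc ∫ y, R y * lapd μ y ≤ ∫ y, Real.exp μ * (R y * lapd 0 y) := by
          apply integral_mono (integrable_R_lapd μ hR hb)
            ((integrable_R_lapd 0 hR hb).const_mul _)
          intro y
          show R y * lapd μ y ≤ Real.exp μ * (R y * lapd 0 y)
          rw [show Real.exp μ * (R y * lapd 0 y) = R y * (Real.exp μ * lapd 0 y) by ring]
          exact mul_le_mul_of_nonneg_left (lapd_le_exp_mul μ y hμ) (hb y).1
      _ = Real.exp μ * ∫ y, R y * lapd 0 y := integral_const_mul _ _
      _ ≤ Real.exp μ * α := mul_le_mul_of_nonneg_left hα (Real.exp_pos μ).le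
  linarith

lemma lb3 (hμ : 0 ≤ μ) (hR : Measurable R) (hb : ∀ y, R y ∈ Icc (0:ℝ) 1)
    (hα : ∫ y, R y * lapd 0 y ≤ α) :
    Real.exp (-μ) * (1 - α) ≤ ∫ y, (1 - R y) * lapd μ y := by
  calc Real.exp (-μ) * (1 - α)
      ≤ Real.exp (-μ) * (1 - ∫ y, R y * lapd 0 y) :=
        mul_le_mul_of_nonneg_left (by linarith) (Real.exp_pos _).le
    _ = ∫ y, Real.exp (-μ) * ((1 - R y) * lapd 0 y) := by
        rw [integral_const_mul, one_sub_integral 0 hR hb]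
    _ ≤ ∫ y, (1 - R y) * lapd μ y := by
        apply integral_mono ((integrable_oneSubR_lapd 0 hR hb).const_mul _)
          (integrable_oneSubR_lapd μ hR hb)
        intro y
        show Real.exp (-μ) * ((1 - R y) * lapd 0 y) ≤ (1 - R y) * lapd μ y
        rw [show Real.exp (-μ) * ((1 - R y) * lapd 0 y)
            = (1 - R y) * (Real.exp (-μ) * lapd 0 y) by ring]
        exact mul_le_mul_of_nonneg_left (exp_neg_mul_le_lapd μ y hμ) (by linarith [(hb y).2])

lemma lb2 (ht0 : 0 ≤ t) (htμ : t ≤ μ) (hR : Measurable R) (hb : ∀ y, R y ∈ Icc (0:ℝ) 1)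
    (hα : ∫ y, R y * lapd 0 y ≤ α) :
    Real.exp (t - μ) * (1/2) + Real.exp (2*t - μ) * ((1/2) * Real.exp (-t) - α)
      ≤ ∫ y, (1 - R y) * lapd μ y := by
  set k := Real.exp (2*t - μ) with hk
  have hkpos : 0 < k := Real.exp_pos _
  have Iind : Integrable ((Iio t).indicator (fun y => lapd μ y - k * lapd 0 y)) :=
    (((integrable_lapd μ).sub ((integrable_lapd 0).const_mul k))).indicator measurableSet_Iio
  have Ilhs : Integrable (fun y =>
      k * ((1 - R y) * lapd 0 y) + (Iio t).indicator (fun y => lapd μ y - k * lapd 0 y) y) :=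
    (((integrable_oneSubR_lapd 0 hR hb).const_mul k)).add Iind
  have hpt : ∀ y, k * ((1 - R y) * lapd 0 y)
      + (Iio t).indicator (fun y => lapd μ y - k * lapd 0 y) y ≤ (1 - R y) * lapd μ y := by
    intro y
    by_cases hy : y < t
    · rw [indicator_of_mem (mem_Iio.mpr hy)]
      have h1 : lapd μ y ≤ k * lapd 0 y := lapd_le_k ht0 htμ hy.le
      have h2 : 0 ≤ R y := (hb y).1
      nlinarith
    · rw [indicator_of_notMem (by simpa using hy)]
      have h1 : k * lapd 0 y ≤ lapd μ y := k_le_lapd ht0 htμ (not_lt.mp hy)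
      have h2 : 0 ≤ 1 - R y := by linarith [(hb y).2]
      nlinarith
  have hmono := integral_mono Ilhs (integrable_oneSubR_lapd μ hR hb) hpt
  rw [integral_add ((integrable_oneSubR_lapd 0 hR hb).const_mul k) Iind,
    integral_const_mul, one_sub_integral 0 hR hb,
    integral_indicator measurableSet_Iio,
    integral_sub ((integrable_lapd μ).integrableOn) (((integrable_lapd 0).const_mul k).integrableOn),
    integral_const_mul, integral_Iio_lapd htμ, integral_Iio_lapd' ht0] at hmono
  rw [zero_sub] at hmono
  nlinarith [hmono, mul_le_mul_of_nonneg_left hα hkpos.le]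
end LB

lemma threshold_meas (t : ℝ) : Measurable ((Ici t).indicator (fun _ => (1:ℝ))) :=
  measurable_const.indicator measurableSet_Ici

lemma threshold_mem (t : ℝ) : ∀ y, (Ici t).indicator (fun _ => (1:ℝ)) y ∈ Icc (0:ℝ) 1 := by
  intro y
  by_cases h : y ∈ Ici t <;> simp [Set.indicator_apply, h]

lemma threshold_typeI (t : ℝ) :
    ∫ y, (Ici t).indicator (fun _ => (1:ℝ)) y ∂(laplaceMeasure 0) = ∫ z in Ici t, lapd 0 z := by
  rw [integral_laplace,
    show (fun y => (Ici t).indicator (fun _ => (1:ℝ)) y * lapd 0 y) = (Ici t).indicator (lapd 0)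
      by funext y; by_cases h : y ∈ Ici t <;> simp [Set.indicator_apply, h]]
  exact integral_indicator measurableSet_Ici

lemma threshold_typeII (μ t : ℝ) :
    ∫ y, (1 - (Ici t).indicator (fun _ => (1:ℝ)) y) ∂(laplaceMeasure μ)
      = ∫ z in Iio t, lapd μ z := by
  rw [integral_laplace,
    show (fun y => (1 - (Ici t).indicator (fun _ => (1:ℝ)) y) * lapd μ y)
        = (Iio t).indicator (lapd μ) by
      funext y
      by_cases h : t ≤ y
      · simp [Set.indicator_apply, mem_Ici, mem_Iio, h, not_lt.mpr h]
      · simp [Set.indicator_apply, mem_Ici, mem_Iio, h, lt_of_not_ge h]]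
  exact integral_indicator measurableSet_Iio


/-- the trade-off function for distinguishing `Lap(0,1)` from
`Lap(μ,1)` (`μ > 0`) is `1 - e^μ x` for `x < e^{-μ}/2`, `e^{-μ}/(4x)` for
`e^{-μ}/2 ≤ x ≤ 1/2`, and `e^{-μ}(1-x)` for `x > 1/2`. -/
theorem tradeoff_laplace
    (μ : ℝ) (hμ : 0 < μ)
    (T : ℝ → ℝ)
    (hT : ∀ α : ℝ, T α = sInf {β : ℝ | ∃ R : ℝ → ℝ, Measurable R ∧
      (∀ y, R y ∈ Icc (0:ℝ) 1) ∧ (∫ y, R y ∂(laplaceMeasure 0)) ≤ α ∧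
      β = ∫ y, (1 - R y) ∂(laplaceMeasure μ)}) :
    ∀ x ∈ Icc (0:ℝ) 1,
      T x = if x < Real.exp (-μ) / 2 then 1 - Real.exp μ * x
            else if x ≤ 1/2 then Real.exp (-μ) / (4 * x)
            else Real.exp (-μ) * (1 - x) := by
  intro x hx
  obtain ⟨hx0, hx1⟩ := hx
  rw [hT x]
  set S : Set ℝ := {β : ℝ | ∃ R : ℝ → ℝ, Measurable R ∧
      (∀ y, R y ∈ Icc (0:ℝ) 1) ∧ (∫ y, R y ∂(laplaceMeasure 0)) ≤ x ∧
      β = ∫ y, (1 - R y) ∂(laplaceMeasure μ)} with hS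
  have hlb0 : ∀ β ∈ S, (0:ℝ) ≤ β := by
    rintro β ⟨R, hRm, hRb, hα, rfl⟩
    rw [integral_laplace μ (fun y => 1 - R y)]
    exact integral_nonneg fun y => mul_nonneg (by linarith [(hRb y).2]) (lapd_pos μ y).le
  have hbdd : BddBelow S := ⟨0, hlb0⟩
  by_cases h1 : x < Real.exp (-μ) / 2
  · rw [if_pos h1]
    have hmem : (1 - Real.exp μ * x) ∈ S := by
      rcases eq_or_lt_of_le hx0 with heq | hxpos
      · refine ⟨fun _ => 0, measurable_const, fun y => by norm_num, ?_, ?_⟩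
        · rw [show (fun y : ℝ => (0:ℝ)) = fun y : ℝ => (0:ℝ) from rfl, integral_zero]
          exact hx0
        · rw [integral_laplace μ (fun _ => 1 - 0), ← heq]
          simp_rw [sub_zero, one_mul]
          rw [integral_lapd]
          ring
      · set t : ℝ := -Real.log (2*x) with htdef
        have h2x : 0 < 2*x := by linarith
        have hent : Real.exp (-t) = 2*x := by rw [htdef, neg_neg, Real.exp_log h2x]
        have hμt : μ ≤ t := by
          have hlog : Real.log (2*x) < -μ := (Real.log_lt_iff_lt_exp h2x).mpr (by linarith)
          rw [htdef]; linarith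
        refine ⟨_, threshold_meas t, threshold_mem t, ?_, ?_⟩
        · rw [threshold_typeI, integral_Ici_lapd (le_trans hμ.le hμt), zero_sub, hent]
          linarith
        · rw [threshold_typeII μ t, integral_Iio_lapd' hμt,
            show μ - t = μ + -t by ring, Real.exp_add, hent]
          ring
    refine le_antisymm (csInf_le hbdd hmem) (le_csInf ⟨_, hmem⟩ ?_)
    rintro β ⟨R, hRm, hRb, hα, rfl⟩
    rw [integral_laplace μ (fun y => 1 - R y)]
    rw [integral_laplace 0 R] at hα
    exact lb1 hμ.le hRm hRb hα
  · rw [if_neg h1]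
    have hex : Real.exp (-μ) / 2 ≤ x := not_lt.mp h1
    have hxpos : 0 < x := lt_of_lt_of_le (by positivity) hex
    by_cases h2 : x ≤ 1/2
    · rw [if_pos h2]
      set t : ℝ := -Real.log (2*x) with htdef
      have h2x : 0 < 2*x := by linarith
      have hent : Real.exp (-t) = 2*x := by rw [htdef, neg_neg, Real.exp_log h2x]
      have hept : Real.exp t = (2*x)⁻¹ := by rw [htdef, Real.exp_neg, Real.exp_log h2x]
      have ht0 : 0 ≤ t := by
        have := Real.log_nonpos (by linarith) (by linarith : 2*x ≤ 1)
        rw [htdef]; linarith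
      have htμ : t ≤ μ := by
        have : -μ ≤ Real.log (2*x) := (Real.le_log_iff_exp_le h2x).mpr (by linarith)
        rw [htdef]; linarith
      have hmem : Real.exp (-μ) / (4*x) ∈ S := by
        refine ⟨_, threshold_meas t, threshold_mem t, ?_, ?_⟩
        · rw [threshold_typeI, integral_Ici_lapd ht0, zero_sub, hent]
          linarith
        · rw [threshold_typeII μ t, integral_Iio_lapd htμ,
            show t - μ = t + -μ by ring, Real.exp_add, hept]
          field_simp
          ring
      refine le_antisymm (csInf_le hbdd hmem) (le_csInf ⟨_, hmem⟩ ?_)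
      rintro β ⟨R, hRm, hRb, hα, rfl⟩
      rw [integral_laplace μ (fun y => 1 - R y)]
      rw [integral_laplace 0 R] at hα
      have key := lb2 ht0 htμ hRm hRb hα
      have he : Real.exp (t - μ) = (2*x)⁻¹ * Real.exp (-μ) := by
        rw [show t - μ = t + -μ by ring, Real.exp_add, hept]
      rw [hent, he] at key
      have h0 : (1:ℝ)/2 * (2*x) - x = 0 := by ring
      rw [h0, mul_zero, add_zero] at key
      calc Real.exp (-μ) / (4*x) = (2*x)⁻¹ * Real.exp (-μ) * (1/2) := by
            field_simp; ring
        _ ≤ _ := key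
    · rw [if_neg h2]
      have hhalf : 1/2 < x := not_le.mp h2
      have hmem : Real.exp (-μ) * (1 - x) ∈ S := by
        rcases lt_or_eq_of_le hx1 with hxlt | hxeq
        · set t : ℝ := Real.log (2*(1-x)) with htdef
          have h2x : 0 < 2*(1-x) := by linarith
          have hept : Real.exp t = 2*(1-x) := by rw [htdef, Real.exp_log h2x]
          have ht0 : t ≤ 0 := by
            rw [htdef]; exact Real.log_nonpos (by linarith) (by linarith)
          refine ⟨_, threshold_meas t, threshold_mem t, ?_, ?_⟩
          · rw [threshold_typeI, integral_Ici_lapd' ht0, sub_zero, hept]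
            linarith
          · rw [threshold_typeII μ t, integral_Iio_lapd (le_trans ht0 hμ.le),
              show t - μ = t + -μ by ring, Real.exp_add, hept]
            ring
        · refine ⟨fun _ => 1, measurable_const, fun y => by norm_num, ?_, ?_⟩
          · rw [integral_laplace 0 (fun _ => 1)]
            simp_rw [one_mul]
            rw [integral_lapd]
            linarith
          · rw [integral_laplace μ (fun _ => 1 - 1)]
            simp_rw [sub_self, zero_mul]
            rw [integral_zero, ← hxeq]
            ring
      refine le_antisymm (csInf_le hbdd hmem) (le_csInf ⟨_, hmem⟩ ?_)
      rintro β ⟨R, hRm, hRb, hα, rfl⟩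
      rw [integral_laplace μ (fun y => 1 - R y)]
      rw [integral_laplace 0 R] at hα
      exact lb3 hμ.le hRm hRb hα
end

section
/- A mechanism M is (ε,δ)-DP if and only if it is f_{ε,δ}-DP, where f_{ε,δ}(y) = max(0, 1 − δ − e^ε y, e^{−ε}(1 − δ − y)). -/
open MeasureTheory Set

/-- The trade-off function of a pair of measures: the infimum type-II error over
all tests with type-I error at most `α`. -/
noncomputable def tradeOff {Y : Type*} [MeasurableSpace Y] (P Q : Measure Y) (α : ℝ) : ℝ :=
  sInf {β : ℝ | ∃ R : Y → ℝ, Measurable R ∧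
    (∀ y, R y ∈ Icc (0:ℝ) 1) ∧ (∫ y, R y ∂P) ≤ α ∧ β = ∫ y, (1 - R y) ∂Q}

/-- `(ε,δ)`-differential privacy of a mechanism `M` with respect to an adjacency
relation `adj`. -/
def IsEpsDeltaDP {X Y : Type*} [MeasurableSpace Y] (M : X → Measure Y)
    (adj : X → X → Prop) (ε δ : ℝ) : Prop :=
  ∀ x x', adj x x' → ∀ S : Set Y, MeasurableSet S →
    (M x S).toReal ≤ Real.exp ε * (M x' S).toReal + δ

/-- `f`-differential privacy of a mechanism `M`. -/
def IsFDP {X Y : Type*} [MeasurableSpace Y] (M : X → Measure Y)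
    (adj : X → X → Prop) (f : ℝ → ℝ) : Prop :=
  ∀ x x', adj x x' → ∀ α ∈ Icc (0:ℝ) 1, f α ≤ tradeOff (M x) (M x') α

lemma integrable_of_mem_Icc {Y : Type*} [MeasurableSpace Y] (P : Measure Y)
    [IsProbabilityMeasure P] {R : Y → ℝ} (hR : Measurable R)
    (hR01 : ∀ y, R y ∈ Icc (0:ℝ) 1) : Integrable R P := by
  refine (integrable_const (1:ℝ)).mono' hR.aestronglyMeasurable ?_
  exact ae_of_all _ fun y => by
    rw [Real.norm_eq_abs, abs_of_nonneg (hR01 y).1]; exact (hR01 y).2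

/-- DP on sets implies DP on randomized tests, by the layer-cake formula. -/
lemma test_ineq {Y : Type*} [MeasurableSpace Y] (P Q : Measure Y)
    [IsProbabilityMeasure P] [IsProbabilityMeasure Q] (ε δ : ℝ) (hδ : 0 ≤ δ)
    (h : ∀ S : Set Y, MeasurableSet S → (P S).toReal ≤ Real.exp ε * (Q S).toReal + δ)
    (R : Y → ℝ) (hR : Measurable R) (hR01 : ∀ y, R y ∈ Icc (0:ℝ) 1) :
    ∫ y, R y ∂P ≤ Real.exp ε * ∫ y, R y ∂Q + δ := by
  have hnnP : 0 ≤ᵐ[P] R := ae_of_all _ fun y => (hR01 y).1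
  have hnnQ : 0 ≤ᵐ[Q] R := ae_of_all _ fun y => (hR01 y).1
  -- pointwise set inequality in ℝ≥0∞
  have hset : ∀ S : Set Y, MeasurableSet S →
      P S ≤ ENNReal.ofReal (Real.exp ε) * Q S + ENNReal.ofReal δ := by
    intro S hS
    calc P S = ENNReal.ofReal (P S).toReal := (ENNReal.ofReal_toReal (measure_ne_top P S)).symm
      _ ≤ ENNReal.ofReal (Real.exp ε * (Q S).toReal + δ) := ENNReal.ofReal_le_ofReal (h S hS)
      _ ≤ ENNReal.ofReal (Real.exp ε * (Q S).toReal) + ENNReal.ofReal δ := ENNReal.ofReal_add_le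
      _ = ENNReal.ofReal (Real.exp ε) * Q S + ENNReal.ofReal δ := by
          rw [ENNReal.ofReal_mul (Real.exp_pos ε).le, ENNReal.ofReal_toReal (measure_ne_top Q S)]
  have h1 : ∫⁻ ω, ENNReal.ofReal (R ω) ∂P = ∫⁻ t in Ioi (0:ℝ), P {a | t < R a} :=
    lintegral_eq_lintegral_meas_lt P hnnP hR.aemeasurable
  have h2 : ∫⁻ ω, ENNReal.ofReal (R ω) ∂Q = ∫⁻ t in Ioi (0:ℝ), Q {a | t < R a} :=
    lintegral_eq_lintegral_meas_lt Q hnnQ hR.aemeasurable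
  have hsplit : (Ioi (0:ℝ)) = Ioc 0 1 ∪ Ioi 1 := (Ioc_union_Ioi_eq_Ioi (by norm_num)).symm
  have key : ∫⁻ t in Ioi (0:ℝ), P {a | t < R a} ≤
      (ENNReal.ofReal (Real.exp ε) * ∫⁻ t in Ioi (0:ℝ), Q {a | t < R a}) + ENNReal.ofReal δ := by
    have hzero : ∫⁻ t in Ioi (1:ℝ), P {a | t < R a} = 0 := by
      rw [setLIntegral_congr_fun measurableSet_Ioi
        (fun t (ht : t ∈ Ioi (1:ℝ)) => ?_), lintegral_zero]
      have : {a | t < R a} = (∅ : Set Y) := by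
        ext a; simp only [mem_setOf_eq, mem_empty_iff_false, iff_false, not_lt]
        exact (hR01 a).2.trans (le_of_lt ht)
      simp [this]
    have hv : volume (Ioc (0:ℝ) 1) = 1 := by simp
    calc ∫⁻ t in Ioi (0:ℝ), P {a | t < R a}
        = (∫⁻ t in Ioc (0:ℝ) 1, P {a | t < R a}) + ∫⁻ t in Ioi (1:ℝ), P {a | t < R a} := by
          rw [hsplit, lintegral_union measurableSet_Ioi (Ioc_disjoint_Ioi le_rfl)]
      _ = ∫⁻ t in Ioc (0:ℝ) 1, P {a | t < R a} := by rw [hzero, add_zero]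
      _ ≤ ∫⁻ t in Ioc (0:ℝ) 1,
            (ENNReal.ofReal (Real.exp ε) * Q {a | t < R a} + ENNReal.ofReal δ) :=
          lintegral_mono fun t => hset _ (hR measurableSet_Ioi)
      _ = (ENNReal.ofReal (Real.exp ε) * ∫⁻ t in Ioc (0:ℝ) 1, Q {a | t < R a})
            + ENNReal.ofReal δ * volume (Ioc (0:ℝ) 1) := by
          rw [lintegral_add_right _ measurable_const, lintegral_const_mul' _ _ (by simp),
            setLIntegral_const]
      _ ≤ (ENNReal.ofReal (Real.exp ε) * ∫⁻ t in Ioi (0:ℝ), Q {a | t < R a})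
            + ENNReal.ofReal δ := by
          rw [hv, mul_one]
          gcongr
          exact Ioc_subset_Ioi_self
  have hPe : ∫ y, R y ∂P = (∫⁻ ω, ENNReal.ofReal (R ω) ∂P).toReal :=
    integral_eq_lintegral_of_nonneg_ae hnnP hR.aestronglyMeasurable
  have hQe : ∫ y, R y ∂Q = (∫⁻ ω, ENNReal.ofReal (R ω) ∂Q).toReal :=
    integral_eq_lintegral_of_nonneg_ae hnnQ hR.aestronglyMeasurable
  have hQfin : ∫⁻ ω, ENNReal.ofReal (R ω) ∂Q ≠ ⊤ := by
    refine ne_top_of_le_ne_top (by simp : (1 : ENNReal) ≠ ⊤) ?_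
    calc ∫⁻ ω, ENNReal.ofReal (R ω) ∂Q ≤ ∫⁻ _, 1 ∂Q :=
          lintegral_mono fun y => by
            simpa using ENNReal.ofReal_le_ofReal (hR01 y).2
      _ = 1 := by simp
  have key' : ∫⁻ ω, ENNReal.ofReal (R ω) ∂P ≤
      (ENNReal.ofReal (Real.exp ε) * ∫⁻ ω, ENNReal.ofReal (R ω) ∂Q) + ENNReal.ofReal δ := by
    rw [h1, h2]; exact key
  have hfin : (ENNReal.ofReal (Real.exp ε) * ∫⁻ ω, ENNReal.ofReal (R ω) ∂Q)
      + ENNReal.ofReal δ ≠ ⊤ := by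
    apply ENNReal.add_ne_top.2
    exact ⟨ENNReal.mul_ne_top ENNReal.ofReal_ne_top hQfin, ENNReal.ofReal_ne_top⟩
  have := ENNReal.toReal_mono hfin key'
  rw [ENNReal.toReal_add (ENNReal.mul_ne_top ENNReal.ofReal_ne_top hQfin) ENNReal.ofReal_ne_top,
    ENNReal.toReal_mul, ENNReal.toReal_ofReal (Real.exp_pos ε).le,
    ENNReal.toReal_ofReal hδ] at this
  rw [hPe, hQe]
  exact this

/-- `M` is `(ε,δ)`-DP iff it is `f_{ε,δ}`-DP where
`f_{ε,δ}(y) = max (0, 1 - δ - e^ε y, e^{-ε} (1 - δ - y))`. -/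
theorem epsDeltaDP_iff_fDP
    {X Y : Type*} [MeasurableSpace Y] (M : X → Measure Y)
    (hM : ∀ x, IsProbabilityMeasure (M x))
    (adj : X → X → Prop) (hadj : ∀ x x', adj x x' → adj x' x)
    (ε δ : ℝ) (hε : 0 ≤ ε) (hδ : 0 ≤ δ) :
    IsEpsDeltaDP M adj ε δ ↔
      IsFDP M adj (fun y => max 0 (max (1 - δ - Real.exp ε * y)
        (Real.exp (-ε) * (1 - δ - y)))) := by
  constructor
  · -- (ε,δ)-DP → f-DP
    intro hDP x x' hxx' α hα
    obtain ⟨hα0, hα1⟩ := hα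
    haveI := hM x; haveI := hM x'
    apply le_csInf
    · exact ⟨1 - α, fun _ => α, measurable_const, fun y => ⟨hα0, hα1⟩,
        by simp, by simp⟩
    rintro β ⟨R, hRm, hR01, hαle, rfl⟩
    have hintP := integrable_of_mem_Icc (M x) hRm hR01
    have hintQ := integrable_of_mem_Icc (M x') hRm hR01
    have hβ : ∫ y, (1 - R y) ∂(M x') = 1 - ∫ y, R y ∂(M x') := by
      rw [integral_sub (integrable_const 1) hintQ, integral_const]; simp
    have hb0 : 0 ≤ ∫ y, (1 - R y) ∂(M x') :=
      integral_nonneg fun y => sub_nonneg.2 (hR01 y).2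
    -- bound 1: using DP(x', x) on test R
    have hb1 : ∫ y, R y ∂(M x') ≤ Real.exp ε * ∫ y, R y ∂(M x) + δ :=
      test_ineq (M x') (M x) ε δ hδ (fun S hS => hDP x' x (hadj x x' hxx') S hS) R hRm hR01
    -- bound 2: using DP(x, x') on test 1 - R
    have hb2 : ∫ y, (1 - R y) ∂(M x) ≤ Real.exp ε * ∫ y, (1 - R y) ∂(M x') + δ :=
      test_ineq (M x) (M x') ε δ hδ (fun S hS => hDP x x' hxx' S hS)
        (fun y => 1 - R y) (measurable_const.sub hRm)
        (fun y => ⟨sub_nonneg.2 (hR01 y).2, sub_le_self 1 (hR01 y).1⟩)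
    have hβP : ∫ y, (1 - R y) ∂(M x) = 1 - ∫ y, R y ∂(M x) := by
      rw [integral_sub (integrable_const 1) hintP, integral_const]; simp
    have hRP0 : 0 ≤ ∫ y, R y ∂(M x) := integral_nonneg fun y => (hR01 y).1
    refine max_le hb0 (max_le ?_ ?_)
    · have := mul_le_mul_of_nonneg_left hαle (Real.exp_pos ε).le
      nlinarith [Real.exp_pos ε]
    · have h1 : 1 - δ - α ≤ Real.exp ε * ∫ y, (1 - R y) ∂(M x') := by
        rw [hβP] at hb2; linarith
      calc Real.exp (-ε) * (1 - δ - α)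
          ≤ Real.exp (-ε) * (Real.exp ε * ∫ y, (1 - R y) ∂(M x')) :=
            mul_le_mul_of_nonneg_left h1 (Real.exp_pos _).le
        _ = ∫ y, (1 - R y) ∂(M x') := by
            rw [← mul_assoc, ← Real.exp_add]; simp
  · -- f-DP → (ε,δ)-DP
    intro hF x x' hxx' S hS
    haveI := hM x; haveI := hM x'
    set α : ℝ := ((M x') S).toReal with hα
    have hα0 : 0 ≤ α := ENNReal.toReal_nonneg
    have hα1 : α ≤ 1 := by
      have h := ENNReal.toReal_mono (measure_ne_top (M x') univ)
        (measure_mono (subset_univ S))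
      simpa [measure_univ] using h
    have hmem : (∫ y, (1 - S.indicator (1 : Y → ℝ) y) ∂(M x)) ∈
        {β : ℝ | ∃ R : Y → ℝ, Measurable R ∧
          (∀ y, R y ∈ Icc (0:ℝ) 1) ∧ (∫ y, R y ∂(M x')) ≤ α ∧
          β = ∫ y, (1 - R y) ∂(M x)} := by
      refine ⟨S.indicator (1 : Y → ℝ), measurable_const.indicator hS, ?_, ?_, rfl⟩
      · intro y
        by_cases hy : y ∈ S <;> simp [indicator_apply, hy]
      · rw [integral_indicator_one hS]; exact le_rfl
    have hbdd : BddBelow {β : ℝ | ∃ R : Y → ℝ, Measurable R ∧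
          (∀ y, R y ∈ Icc (0:ℝ) 1) ∧ (∫ y, R y ∂(M x')) ≤ α ∧
          β = ∫ y, (1 - R y) ∂(M x)} := by
      refine ⟨0, ?_⟩
      rintro β ⟨R, _, hR01, _, rfl⟩
      exact integral_nonneg fun y => sub_nonneg.2 (hR01 y).2
    have htrade : tradeOff (M x') (M x) α ≤
        ∫ y, (1 - S.indicator (1 : Y → ℝ) y) ∂(M x) :=
      csInf_le hbdd hmem
    have hEval : ∫ y, (1 - S.indicator (1 : Y → ℝ) y) ∂(M x)
        = 1 - ((M x) S).toReal := by
      have hind : Integrable (S.indicator (1 : Y → ℝ)) (M x) :=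
        (integrable_const (1:ℝ)).indicator hS
      rw [integral_sub (integrable_const (1:ℝ)) hind, integral_const,
        integral_indicator_one hS]
      simp; rfl
    have hf := hF x' x (hadj x x' hxx') α ⟨hα0, hα1⟩
    have hmax : 1 - δ - Real.exp ε * α ≤ tradeOff (M x') (M x) α :=
      le_trans (le_max_of_le_left le_rfl) (le_trans (le_max_right _ _) hf)
    rw [hEval] at htrade
    have : 1 - δ - Real.exp ε * α ≤ 1 - ((M x) S).toReal := le_trans hmax htrade
    linarith
end

section
/- Let f be a symmetric trade-off function (convex, continuous, non-increasing, f(0) ≤ 1) and let P be the uniform distribution on [0,1] and Q be the distribution on [0,1] whose CDF is F_Q(x) = f(1−x) for x ∈ [0,1) with an atom of mass 1 − f(0) at 1. Then the trade-off function of (P,Q) equals f, i.e., T_{P,Q} = f. -/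
open MeasureTheory Set Filter Topology

/-- If the CDF of `Q` grows at most at rate `b` on `[0,c)`, then `Q ≤ b • volume` there. -/
lemma restrict_le_of_cdf_lip (Q : Measure ℝ) [IsProbabilityMeasure Q]
    (F : ℝ → ℝ) (b c : ℝ) (hc : 0 < c) (hb : 0 ≤ b)
    (hFcont : ContinuousOn F (Icc 0 c))
    (hF0 : F 0 = 0)
    (hFnn : ∀ x, 0 ≤ x → x ≤ c → 0 ≤ F x)
    (hQF : ∀ x, 0 ≤ x → x < c → Q (Iic x) = ENNReal.ofReal (F x))
    (hQc : Q (Iio c) = ENNReal.ofReal (F c))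
    (hQ0 : Q (Iio 0) = 0)
    (hlip : ∀ u v, 0 ≤ u → u ≤ v → v ≤ c → F v - F u ≤ b * (v - u)) :
    Q.restrict (Ico 0 c) ≤ (ENNReal.ofReal b • volume).restrict (Ico 0 c) := by
  set m : ℝ → ℝ := fun x => max 0 (min x c) with hm
  have hm_mem : ∀ x, m x ∈ Icc 0 c := fun x =>
    ⟨le_max_left _ _, max_le (le_of_lt hc) (min_le_right _ _)⟩
  have hm_mono : Monotone m := fun x y hxy =>
    max_le_max le_rfl (min_le_min hxy le_rfl)
  have hm_cont : Continuous m := continuous_const.max (continuous_id.min continuous_const)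
  have hGmono : ∀ x y : ℝ, x ≤ y → b * m x - F (m x) ≤ b * m y - F (m y) := by
    intro x y hxy
    have h1 := hlip (m x) (m y) (hm_mem x).1 (hm_mono hxy) (hm_mem y).2
    nlinarith [hm_mono hxy]
  have hGcont : Continuous fun x => b * m x - F (m x) := by
    have h : ContinuousOn (fun t : ℝ => b * t - F t) (Icc 0 c) :=
      (continuousOn_const.mul continuousOn_id).sub hFcont
    exact h.comp_continuous hm_cont hm_mem
  set G : StieltjesFunction ℝ :=
    { toFun := fun x => b * m x - F (m x)
      mono' := hGmono
      right_continuous' := fun x => hGcont.continuousWithinAt } with hG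
  have hGbot : Tendsto G atBot (𝓝 0) := by
    have : ∀ x : ℝ, x ≤ 0 → G x = 0 := by
      intro x hx
      have : m x = 0 := by
        simp only [hm]
        rw [max_eq_left]
        exact le_trans (min_le_left _ _) hx
      simp [hG, this, hF0]
    exact Tendsto.congr' (by filter_upwards [eventually_le_atBot (0:ℝ)] using fun x hx => (this x hx).symm) tendsto_const_nhds
  have hGtop : Tendsto G atTop (𝓝 (b * c - F c)) := by
    have : ∀ x : ℝ, c ≤ x → G x = b * c - F c := by
      intro x hx
      have : m x = c := by
        simp only [hm]
        rw [min_eq_right hx, max_eq_right hc.le]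
      simp [hG, this]
    exact Tendsto.congr' (by filter_upwards [eventually_ge_atTop c] using fun x hx => (this x hx).symm) tendsto_const_nhds
  haveI : IsFiniteMeasure G.measure :=
    ⟨by rw [G.measure_univ hGbot hGtop]; exact ENNReal.ofReal_lt_top⟩
  have hGIic : ∀ x, G.measure (Iic x) = ENNReal.ofReal (G x) := by
    intro x
    rw [G.measure_Iic hGbot x, sub_zero]
  have key : G.measure + Q.restrict (Ico 0 c) = (ENNReal.ofReal b • volume).restrict (Ico 0 c) := by
    refine Measure.ext_of_Iic _ _ (fun a => ?_)
    rw [Measure.add_apply, hGIic, Measure.restrict_apply measurableSet_Iic,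
      Measure.restrict_apply measurableSet_Iic, Measure.smul_apply, smul_eq_mul]
    rcases lt_or_ge a 0 with ha | ha
    · have hma : m a = 0 := by
        simp only [hm]; rw [max_eq_left]; exact le_trans (min_le_left _ _) ha.le
      have hempty : Iic a ∩ Ico 0 c = ∅ := by
        ext x; simp only [mem_inter_iff, mem_Iic, mem_Ico, mem_empty_iff_false, iff_false]
        rintro ⟨h1, h2, h3⟩; linarith
      simp [hG, hma, hempty, hF0]
    · rcases lt_or_ge a c with hac | hac
      · have hma : m a = a := by
          simp only [hm]; rw [min_eq_left hac.le, max_eq_right ha]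
        have hset : Iic a ∩ Ico 0 c = Icc 0 a := by
          ext x; simp only [mem_inter_iff, mem_Iic, mem_Ico, mem_Icc]
          constructor
          · rintro ⟨h1, h2, h3⟩; exact ⟨h2, h1⟩
          · rintro ⟨h1, h2⟩; exact ⟨h2, h1, lt_of_le_of_lt h2 hac⟩
        have hQIcc : Q (Icc 0 a) = ENNReal.ofReal (F a) := by
          have hdisj : Disjoint (Iio (0:ℝ)) (Icc 0 a) := by
            rw [disjoint_left]; intro x hx hx'; exact absurd hx'.1 (not_le.2 hx)
          have hun : Iio (0:ℝ) ∪ Icc 0 a = Iic a := by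
            ext x; simp only [mem_union, mem_Iio, mem_Icc, mem_Iic]
            constructor
            · rintro (h | ⟨h1, h2⟩)
              · linarith
              · exact h2
            · intro h
              rcases lt_or_ge x 0 with h' | h'
              · exact Or.inl h'
              · exact Or.inr ⟨h', h⟩
          have := measure_union hdisj measurableSet_Icc (μ := Q)
          rw [hun, hQ0, zero_add] at this
          rw [← this, hQF a ha hac]
        rw [hset, hQIcc, Real.volume_Icc, sub_zero, hG]
        simp only [hma]
        rw [← ENNReal.ofReal_add (by nlinarith [hlip 0 a le_rfl ha hac.le]) (hFnn a ha hac.le),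
          ← ENNReal.ofReal_mul hb]
        ring_nf
      · have hma : m a = c := by
          simp only [hm]; rw [min_eq_right hac, max_eq_right hc.le]
        have hset : Iic a ∩ Ico 0 c = Ico 0 c := by
          rw [inter_eq_right]; intro x hx; exact le_trans hx.2.le hac
        have hQIco : Q (Ico 0 c) = ENNReal.ofReal (F c) := by
          have hdisj : Disjoint (Iio (0:ℝ)) (Ico 0 c) := by
            rw [disjoint_left]; intro x hx hx'; exact absurd hx'.1 (not_le.2 hx)
          have hun : Iio (0:ℝ) ∪ Ico 0 c = Iio c := by
            ext x; simp only [mem_union, mem_Iio, mem_Ico]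
            constructor
            · rintro (h | ⟨h1, h2⟩)
              · linarith
              · exact h2
            · intro h
              rcases lt_or_ge x 0 with h' | h'
              · exact Or.inl h'
              · exact Or.inr ⟨h', h⟩
          have := measure_union hdisj measurableSet_Ico (μ := Q)
          rw [hun, hQ0, zero_add] at this
          rw [← this, hQc]
        rw [hset, hQIco, Real.volume_Ico, sub_zero, hG]
        simp only [hma]
        rw [← ENNReal.ofReal_add (by nlinarith [hlip 0 c le_rfl hc.le le_rfl]) (hFnn c hc.le le_rfl),
          ← ENNReal.ofReal_mul hb]
        ring_nf
  calc Q.restrict (Ico 0 c) ≤ G.measure + Q.restrict (Ico 0 c) := Measure.le_add_left le_rfl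
    _ = _ := key

/-- If the CDF of `Q` grows at least at rate `b` on `[c,d)`, then `Q ≥ b • volume` there. -/
lemma restrict_ge_of_cdf_lip (Q : Measure ℝ) [IsProbabilityMeasure Q]
    (F : ℝ → ℝ) (b c d : ℝ) (hcd : c < d) (hb : 0 ≤ b)
    (hFcont : ContinuousOn F (Icc c d))
    (hFc0 : 0 ≤ F c)
    (hQc : Q (Iio c) = ENNReal.ofReal (F c))
    (hQF : ∀ x, c ≤ x → x < d → Q (Iic x) = ENNReal.ofReal (F x))
    (hQd : Q (Iio d) = ENNReal.ofReal (F d))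
    (hlip : ∀ u v, c ≤ u → u ≤ v → v ≤ d → b * (v - u) ≤ F v - F u) :
    (ENNReal.ofReal b • volume).restrict (Ico c d) ≤ Q.restrict (Ico c d) := by
  set m : ℝ → ℝ := fun x => max c (min x d) with hm
  have hm_mem : ∀ x, m x ∈ Icc c d := fun x =>
    ⟨le_max_left _ _, max_le hcd.le (min_le_right _ _)⟩
  have hm_mono : Monotone m := fun x y hxy =>
    max_le_max le_rfl (min_le_min hxy le_rfl)
  have hm_cont : Continuous m := continuous_const.max (continuous_id.min continuous_const)
  have hGmono : ∀ x y : ℝ, x ≤ y →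
      F (m x) - F c - b * (m x - c) ≤ F (m y) - F c - b * (m y - c) := by
    intro x y hxy
    have h1 := hlip (m x) (m y) (hm_mem x).1 (hm_mono hxy) (hm_mem y).2
    nlinarith [hm_mono hxy]
  have hGcont : Continuous fun x => F (m x) - F c - b * (m x - c) := by
    have h : ContinuousOn (fun t : ℝ => F t - F c - b * (t - c)) (Icc c d) :=
      (hFcont.sub continuousOn_const).sub
        (continuousOn_const.mul (continuousOn_id.sub continuousOn_const))
    exact h.comp_continuous hm_cont hm_mem
  set G : StieltjesFunction ℝ :=
    { toFun := fun x => F (m x) - F c - b * (m x - c)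
      mono' := hGmono
      right_continuous' := fun x => hGcont.continuousWithinAt } with hG
  have hmc : ∀ x : ℝ, x ≤ c → m x = c := by
    intro x hx
    simp only [hm]; rw [max_eq_left]; exact le_trans (min_le_left _ _) hx
  have hmd : ∀ x : ℝ, d ≤ x → m x = d := by
    intro x hx
    simp only [hm]; rw [min_eq_right hx, max_eq_right hcd.le]
  have hGbot : Tendsto G atBot (𝓝 0) := by
    have h0 : ∀ x : ℝ, x ≤ c → G x = 0 := by
      intro x hx; simp [hG, hmc x hx]
    exact Tendsto.congr'
      (by filter_upwards [eventually_le_atBot (c:ℝ)] using fun x hx => (h0 x hx).symm)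
      tendsto_const_nhds
  have hGtop : Tendsto G atTop (𝓝 (F d - F c - b * (d - c))) := by
    have h0 : ∀ x : ℝ, d ≤ x → G x = F d - F c - b * (d - c) := by
      intro x hx; simp [hG, hmd x hx]
    exact Tendsto.congr'
      (by filter_upwards [eventually_ge_atTop d] using fun x hx => (h0 x hx).symm)
      tendsto_const_nhds
  have hGIic : ∀ x, G.measure (Iic x) = ENNReal.ofReal (G x) := by
    intro x; rw [G.measure_Iic hGbot x, sub_zero]
  haveI : IsFiniteMeasure G.measure :=
    ⟨by rw [G.measure_univ hGbot hGtop]; exact ENNReal.ofReal_lt_top⟩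
  haveI : IsFiniteMeasure ((ENNReal.ofReal b • volume).restrict (Ico c d)) := by
    constructor
    rw [Measure.restrict_apply MeasurableSet.univ, univ_inter, Measure.smul_apply, smul_eq_mul,
      Real.volume_Ico]
    exact ENNReal.mul_lt_top ENNReal.ofReal_lt_top ENNReal.ofReal_lt_top
  have key : (ENNReal.ofReal b • volume).restrict (Ico c d) + G.measure = Q.restrict (Ico c d) := by
    refine Measure.ext_of_Iic _ _ (fun a => ?_)
    rw [Measure.add_apply, hGIic, Measure.restrict_apply measurableSet_Iic,
      Measure.restrict_apply measurableSet_Iic, Measure.smul_apply, smul_eq_mul]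
    rcases lt_or_ge a c with ha | ha
    · have hempty : Iic a ∩ Ico c d = ∅ := by
        ext x; simp only [mem_inter_iff, mem_Iic, mem_Ico, mem_empty_iff_false, iff_false]
        rintro ⟨h1, h2, h3⟩; linarith
      simp [hG, hmc a ha.le, hempty]
    · rcases lt_or_ge a d with had | had
      · have hma : m a = a := by
          simp only [hm]; rw [min_eq_left had.le, max_eq_right ha]
        have hset : Iic a ∩ Ico c d = Icc c a := by
          ext x; simp only [mem_inter_iff, mem_Iic, mem_Ico, mem_Icc]
          constructor
          · rintro ⟨h1, h2, h3⟩; exact ⟨h2, h1⟩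
          · rintro ⟨h1, h2⟩; exact ⟨h2, h1, lt_of_le_of_lt h2 had⟩
        have hQIcc : Q (Icc c a) = ENNReal.ofReal (F a - F c) := by
          have hdisj : Disjoint (Iio c) (Icc c a) := by
            rw [disjoint_left]; intro x hx hx'; exact absurd hx'.1 (not_le.2 hx)
          have hun : Iio c ∪ Icc c a = Iic a := by
            ext x; simp only [mem_union, mem_Iio, mem_Icc, mem_Iic]
            constructor
            · rintro (h | ⟨h1, h2⟩)
              · linarith
              · exact h2
            · intro h
              rcases lt_or_ge x c with h' | h'
              · exact Or.inl h'
              · exact Or.inr ⟨h', h⟩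
          have hu := measure_union hdisj measurableSet_Icc (μ := Q)
          rw [hun, hQc, hQF a ha had] at hu
          have hsum : ENNReal.ofReal (F a) = ENNReal.ofReal (F c) + ENNReal.ofReal (F a - F c) := by
            rw [← ENNReal.ofReal_add hFc0 (by nlinarith [hlip c a le_rfl ha had.le])]
            ring_nf
          rw [hsum] at hu
          exact ((ENNReal.add_right_inj ENNReal.ofReal_ne_top).mp hu).symm
        rw [hset, hQIcc, Real.volume_Icc, hG]
        simp only [hma]
        rw [← ENNReal.ofReal_mul hb,
          ← ENNReal.ofReal_add (by nlinarith) (by nlinarith [hlip c a le_rfl ha had.le])]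
        ring_nf
      · have hma : m a = d := hmd a had
        have hset : Iic a ∩ Ico c d = Ico c d := by
          rw [inter_eq_right]; intro x hx; exact le_trans hx.2.le had
        have hQIco : Q (Ico c d) = ENNReal.ofReal (F d - F c) := by
          have hdisj : Disjoint (Iio c) (Ico c d) := by
            rw [disjoint_left]; intro x hx hx'; exact absurd hx'.1 (not_le.2 hx)
          have hun : Iio c ∪ Ico c d = Iio d := by
            ext x; simp only [mem_union, mem_Iio, mem_Ico]
            constructor
            · rintro (h | ⟨h1, h2⟩)
              · linarith
              · exact h2
            · intro h
              rcases lt_or_ge x c with h' | h'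
              · exact Or.inl h'
              · exact Or.inr ⟨h', h⟩
          have hu := measure_union hdisj measurableSet_Ico (μ := Q)
          rw [hun, hQc, hQd] at hu
          have hsum : ENNReal.ofReal (F d) = ENNReal.ofReal (F c) + ENNReal.ofReal (F d - F c) := by
            rw [← ENNReal.ofReal_add hFc0 (by nlinarith [hlip c d le_rfl hcd.le le_rfl])]
            ring_nf
          rw [hsum] at hu
          exact ((ENNReal.add_right_inj ENNReal.ofReal_ne_top).mp hu).symm
        rw [hset, hQIco, Real.volume_Ico, hG]
        simp only [hma]
        rw [← ENNReal.ofReal_mul hb,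
          ← ENNReal.ofReal_add (by nlinarith) (by nlinarith [hlip c d le_rfl hcd.le le_rfl])]
        ring_nf
  calc (ENNReal.ofReal b • volume).restrict (Ico c d)
      ≤ (ENNReal.ofReal b • volume).restrict (Ico c d) + G.measure := Measure.le_add_right le_rfl
    _ = _ := key

lemma integrable_of_mem_Icc01 {R : ℝ → ℝ} (hRmeas : Measurable R)
    (hR01 : ∀ y, R y ∈ Icc (0:ℝ) 1) (μ : Measure ℝ) [IsFiniteMeasure μ] :
    Integrable R μ := by
  refine Integrable.mono' (integrable_const 1) hRmeas.aestronglyMeasurable ?_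
  filter_upwards with y
  rw [Real.norm_eq_abs, abs_of_nonneg (hR01 y).1]
  exact (hR01 y).2


lemma exists_subgrad (f : ℝ → ℝ) (hconv : ConvexOn ℝ (Icc (0:ℝ) 1) f)
    (hanti : AntitoneOn f (Icc (0:ℝ) 1)) {s : ℝ} (hs : s ∈ Ioo (0:ℝ) 1) :
    ∃ k : ℝ, k ≤ 0 ∧ (∀ u, 0 ≤ u → u < s → (f s - f u) / (s - u) ≤ k) ∧
      (∀ u v, s ≤ u → u ≤ v → v ≤ 1 → f u - f v ≤ (-k) * (v - u)) ∧
      (∀ u v, 0 ≤ u → u ≤ v → v ≤ s → (-k) * (v - u) ≤ f u - f v) := by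
  obtain ⟨hs0, hs1⟩ := hs
  have hsI : s ∈ Icc (0:ℝ) 1 := ⟨hs0.le, hs1.le⟩
  set K : Set ℝ := (fun u => (f s - f u) / (s - u)) '' (Ico 0 s) with hK
  have hne : K.Nonempty := ⟨_, ⟨0, ⟨le_rfl, hs0⟩, rfl⟩⟩
  -- elements of K rewritten as secant slopes based at s
  have hslope : ∀ u, u < s → (f s - f u) / (s - u) = (f u - f s) / (u - s) := by
    intro u hu
    rw [← neg_div_neg_eq]
    ring_nf
  have hbdd : BddAbove K := by
    refine ⟨(f 1 - f s) / (1 - s), ?_⟩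
    rintro r ⟨u, ⟨hu0, hus⟩, rfl⟩
    simp only []
    rw [hslope u hus]
    exact hconv.secant_mono hsI ⟨hu0, le_trans hus.le hs1.le⟩ ⟨zero_le_one, le_rfl⟩
      (ne_of_lt hus) (ne_of_gt hs1) (le_trans hus.le hs1.le)
  set k : ℝ := sSup K with hk
  have hmem : ∀ u, 0 ≤ u → u < s → (f s - f u) / (s - u) ≤ k :=
    fun u h0 h1 => le_csSup hbdd ⟨u, ⟨h0, h1⟩, rfl⟩
  have hk0 : k ≤ 0 := by
    refine csSup_le hne ?_
    rintro r ⟨u, ⟨hu0, hus⟩, rfl⟩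
    apply div_nonpos_of_nonpos_of_nonneg
    · have := hanti ⟨hu0, le_trans hus.le hs1.le⟩ hsI hus.le
      linarith
    · linarith
  have hright : ∀ v, s < v → v ≤ 1 → k ≤ (f v - f s) / (v - s) := by
    intro v hsv hv1
    refine csSup_le hne ?_
    rintro r ⟨u, ⟨hu0, hus⟩, rfl⟩
    simp only []
    rw [hslope u hus]
    exact hconv.secant_mono hsI ⟨hu0, le_trans hus.le hs1.le⟩ ⟨le_trans hs0.le hsv.le, hv1⟩
      (ne_of_lt hus) (ne_of_gt hsv) (le_trans hus.le hsv.le)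
  refine ⟨k, hk0, hmem, ?_, ?_⟩
  · -- right Lipschitz: slopes above s are ≥ k
    intro u v hsu huv hv1
    rcases eq_or_lt_of_le huv with rfl | huv
    · simp
    have huI : u ∈ Icc (0:ℝ) 1 := ⟨le_trans hs0.le hsu, le_trans huv.le hv1⟩
    have hvI : v ∈ Icc (0:ℝ) 1 := ⟨le_trans huI.1 huv.le, hv1⟩
    have hkslope : k ≤ (f v - f u) / (v - u) := by
      rcases eq_or_lt_of_le hsu with rfl | hsu
      · exact hright v huv hv1
      · have h1 : k ≤ (f v - f s) / (v - s) := hright v (lt_trans hsu huv) hv1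
        have h2 : (f s - f v) / (s - v) ≤ (f u - f v) / (u - v) :=
          hconv.secant_mono hvI hsI huI (ne_of_lt (lt_trans hsu huv))
            (ne_of_lt huv) hsu.le
        have h3 : (f s - f v) / (s - v) = (f v - f s) / (v - s) := by
          rw [← neg_div_neg_eq]; ring_nf
        have h4 : (f u - f v) / (u - v) = (f v - f u) / (v - u) := by
          rw [← neg_div_neg_eq]; ring_nf
        rw [h3, h4] at h2
        linarith
    have := (le_div_iff₀ (by linarith : (0:ℝ) < v - u)).mp hkslope
    nlinarith
  · -- left Lipschitz: slopes below s are ≤ k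
    intro u v hu0 huv hvs
    rcases eq_or_lt_of_le huv with rfl | huv
    · simp
    have huI : u ∈ Icc (0:ℝ) 1 := ⟨hu0, le_trans (le_trans huv.le hvs) hs1.le⟩
    have hvI : v ∈ Icc (0:ℝ) 1 := ⟨le_trans hu0 huv.le, le_trans hvs hs1.le⟩
    have hkslope : (f v - f u) / (v - u) ≤ k := by
      rcases eq_or_lt_of_le hvs with rfl | hvs
      · have := hmem u hu0 huv
        rw [hslope u huv] at this
        have h4 : (f u - f v) / (u - v) = (f v - f u) / (v - u) := by
          rw [← neg_div_neg_eq]; ring_nf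
        rw [h4] at this
        exact this
      · have h1 : (f v - f u) / (v - u) ≤ (f s - f u) / (s - u) :=
          hconv.secant_mono huI hvI hsI (ne_of_gt huv) (ne_of_gt (lt_trans huv hvs)) hvs.le
        have h2 := hmem u hu0 (lt_trans huv hvs)
        rw [hslope u (lt_trans huv hvs)] at h2
        have h3 : (f u - f s) / (u - s) = (f s - f u) / (s - u) := by
          rw [← neg_div_neg_eq]; ring_nf
        rw [h3] at h2
        linarith
    have := (div_le_iff₀ (by linarith : (0:ℝ) < v - u)).mp hkslope
    nlinarith

lemma core_bound (Q : Measure ℝ) [IsProbabilityMeasure Q] (f : ℝ → ℝ)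
    (hcont : ContinuousOn f (Icc (0:ℝ) 1))
    (hfnn : ∀ x ∈ Icc (0:ℝ) 1, 0 ≤ f x)
    (hf1 : f 1 = 0)
    (hQsupp : Q (Icc (0:ℝ) 1)ᶜ = 0)
    (hQIic : ∀ x, 0 ≤ x → x < 1 → Q (Iic x) = ENNReal.ofReal (f (1 - x)))
    (hQIio : ∀ x, 0 < x → x ≤ 1 → Q (Iio x) = ENNReal.ofReal (f (1 - x)))
    (hQ0 : Q (Iio 0) = 0)
    (R : ℝ → ℝ) (hRmeas : Measurable R) (hR01 : ∀ y, R y ∈ Icc (0:ℝ) 1)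
    (s b : ℝ) (hs : s ∈ Ioo (0:ℝ) 1) (hb : 0 ≤ b)
    (hlip1 : ∀ u v, s ≤ u → u ≤ v → v ≤ 1 → f u - f v ≤ b * (v - u))
    (hlip2 : ∀ u v, 0 ≤ u → u ≤ v → v ≤ s → b * (v - u) ≤ f u - f v) :
    f s - b * ((∫ y, R y ∂(volume.restrict (Icc (0:ℝ) 1))) - s) ≤ ∫ y, (1 - R y) ∂Q := by
  obtain ⟨hs0, hs1⟩ := hs
  set c : ℝ := 1 - s with hcdef
  have hc0 : 0 < c := by simp [hcdef]; linarith
  have hc1 : c < 1 := by simp [hcdef]; linarith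
  set F : ℝ → ℝ := fun x => f (1 - x) with hF
  have hsub : ∀ x : ℝ, 0 ≤ x → x ≤ 1 → (1 - x) ∈ Icc (0:ℝ) 1 := by
    intro x h1 h2; constructor <;> [linarith; linarith]
  have hFcont : ContinuousOn F (Icc (0:ℝ) 1) := by
    apply hcont.comp (continuousOn_const.sub continuousOn_id)
    intro x hx; exact hsub x hx.1 hx.2
  -- the two measure comparisons
  have hA : Q.restrict (Ico 0 c) ≤ (ENNReal.ofReal b • volume).restrict (Ico 0 c) := by
    refine restrict_le_of_cdf_lip Q F b c hc0 hb
      (hFcont.mono (Icc_subset_Icc le_rfl hc1.le))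
      (by simp [hF, hf1])
      (fun x h1 h2 => hfnn _ (hsub x h1 (le_trans h2 hc1.le)))
      (fun x h1 h2 => hQIic x h1 (lt_trans h2 hc1))
      (hQIio c hc0 hc1.le)
      hQ0
      (fun u v h1 h2 h3 => ?_)
    have := hlip1 (1 - v) (1 - u) (by simp [hcdef] at h3 ⊢; linarith) (by linarith) (by linarith)
    simp only [hF]
    linarith
  have hB : (ENNReal.ofReal b • volume).restrict (Ico c 1) ≤ Q.restrict (Ico c 1) := by
    refine restrict_ge_of_cdf_lip Q F b c 1 hc1 hb
      (hFcont.mono (Icc_subset_Icc hc0.le le_rfl))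
      (hfnn _ (hsub c hc0.le hc1.le))
      (hQIio c hc0 hc1.le)
      (fun x h1 h2 => hQIic x (le_trans hc0.le h1) h2)
      (by rw [show F 1 = f 0 by simp [hF]]; rw [show f 0 = f (1-1) by norm_num]; exact hQIio 1 one_pos le_rfl)
      (fun u v h1 h2 h3 => ?_)
    have := hlip2 (1 - v) (1 - u) (by linarith) (by linarith) (by simp [hcdef] at h1 ⊢; linarith)
    simp only [hF]
    linarith
  -- finiteness and integrability
  haveI hfin : IsFiniteMeasure (volume.restrict (Icc (0:ℝ) 1)) := by
    constructor
    rw [Measure.restrict_apply_univ, Real.volume_Icc]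
    exact ENNReal.ofReal_lt_top
  haveI hfinb : IsFiniteMeasure ((ENNReal.ofReal b • volume).restrict (Ico 0 c)) := by
    constructor
    rw [Measure.restrict_apply_univ, Measure.smul_apply, smul_eq_mul, Real.volume_Ico]
    exact ENNReal.mul_lt_top ENNReal.ofReal_lt_top ENNReal.ofReal_lt_top
  have hIR : ∀ (μ : Measure ℝ) [IsFiniteMeasure μ], Integrable R μ :=
    fun μ _ => integrable_of_mem_Icc01 hRmeas hR01 μ
  have hI1R : ∀ (μ : Measure ℝ) [IsFiniteMeasure μ], Integrable (fun y => 1 - R y) μ :=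
    fun μ _ => (integrable_const 1).sub (hIR μ)
  -- decompositions of measures
  have hd1 : Disjoint (Ico (0:ℝ) c) (Ico c 1) := Ico_disjoint_Ico_same
  have hd2 : Disjoint (Ico (0:ℝ) 1) ({1} : Set ℝ) := by
    simp [disjoint_singleton_right]
  have hsplitIcc : Icc (0:ℝ) 1 = (Ico (0:ℝ) c ∪ Ico c 1) ∪ {1} := by
    rw [Ico_union_Ico_eq_Ico hc0.le hc1.le, Ico_union_right zero_le_one]
  have hQrsplit : Q.restrict (Icc (0:ℝ) 1)
      = Q.restrict (Ico 0 c) + Q.restrict (Ico c 1) + Q.restrict {1} := by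
    rw [hsplitIcc, Measure.restrict_union (hd2.mono_left (by rw [Ico_union_Ico_eq_Ico hc0.le hc1.le]))
      (measurableSet_singleton 1),
      Measure.restrict_union hd1 measurableSet_Ico]
  have hQfull : Q = Q.restrict (Ico 0 c) + Q.restrict (Ico c 1) + Q.restrict {1} := by
    rw [← hQrsplit]
    have h1 : Q.restrict (Icc (0:ℝ) 1)ᶜ = 0 := Measure.restrict_eq_zero.2 hQsupp
    have := Measure.restrict_add_restrict_compl (μ := Q) (measurableSet_Icc (a := (0:ℝ)) (b := 1))
    rw [h1, add_zero] at this
    exact this.symm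
  have hvol1 : volume.restrict ({1} : Set ℝ) = 0 :=
    Measure.restrict_eq_zero.2 Real.volume_singleton
  have hPsplit : volume.restrict (Icc (0:ℝ) 1)
      = volume.restrict (Ico 0 c) + volume.restrict (Ico c 1) := by
    rw [hsplitIcc, Measure.restrict_union (hd2.mono_left (by rw [Ico_union_Ico_eq_Ico hc0.le hc1.le]))
      (measurableSet_singleton 1),
      Measure.restrict_union hd1 measurableSet_Ico, hvol1, add_zero]
  -- integral decompositions
  have htdec : (∫ y, R y ∂(volume.restrict (Icc (0:ℝ) 1)))
      = (∫ y, R y ∂(volume.restrict (Ico 0 c))) + (∫ y, R y ∂(volume.restrict (Ico c 1))) := by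
    rw [hPsplit, integral_add_measure (hIR _) (hIR _)]
  have hβdec : (∫ y, (1 - R y) ∂Q)
      = (∫ y, (1 - R y) ∂(Q.restrict (Ico 0 c))) + (∫ y, (1 - R y) ∂(Q.restrict (Ico c 1)))
        + (∫ y, (1 - R y) ∂(Q.restrict {1})) := by
    conv_lhs => rw [hQfull]
    rw [integral_add_measure ((hI1R _).add_measure (hI1R _)) (hI1R _),
      integral_add_measure (hI1R _) (hI1R _)]
  -- piece 1
  have hQIco0c : Q (Ico 0 c) = ENNReal.ofReal (f s) := by
    have hdisj : Disjoint (Iio (0:ℝ)) (Ico 0 c) := by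
      rw [disjoint_left]; intro x hx hx'; exact absurd hx'.1 (not_le.2 hx)
    have hun : Iio (0:ℝ) ∪ Ico 0 c = Iio c := by
      ext x; simp only [mem_union, mem_Iio, mem_Ico]
      constructor
      · rintro (h | ⟨h1, h2⟩)
        · linarith
        · exact h2
      · intro h
        rcases lt_or_ge x 0 with h' | h'
        · exact Or.inl h'
        · exact Or.inr ⟨h', h⟩
    have hu := measure_union hdisj measurableSet_Ico (μ := Q)
    rw [hun, hQ0, zero_add, hQIio c hc0 hc1.le] at hu
    rw [← hu]
    norm_num [hcdef]
  have hp1 : f s - b * (∫ y, R y ∂(volume.restrict (Ico 0 c)))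
      ≤ ∫ y, (1 - R y) ∂(Q.restrict (Ico 0 c)) := by
    rw [integral_sub (integrable_const 1) (hIR _), integral_const, measureReal_def, Measure.restrict_apply_univ,
      hQIco0c, smul_eq_mul, mul_one, ENNReal.toReal_ofReal (hfnn s ⟨hs0.le, hs1.le⟩)]
    have hmono : (∫ y, R y ∂(Q.restrict (Ico 0 c)))
        ≤ ∫ y, R y ∂((ENNReal.ofReal b • volume).restrict (Ico 0 c)) :=
      integral_mono_measure hA (Eventually.of_forall (fun y => by simp only [Pi.zero_apply]; exact (hR01 y).1)) (hIR _)
    have heq : (∫ y, R y ∂((ENNReal.ofReal b • volume).restrict (Ico 0 c)))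
        = b * ∫ y, R y ∂(volume.restrict (Ico 0 c)) := by
      rw [Measure.restrict_smul, integral_smul_measure, ENNReal.toReal_ofReal hb, smul_eq_mul]
    linarith
  -- piece 2
  haveI hfinb2 : IsFiniteMeasure ((ENNReal.ofReal b • volume).restrict (Ico c 1)) := by
    constructor
    rw [Measure.restrict_apply_univ, Measure.smul_apply, smul_eq_mul, Real.volume_Ico]
    exact ENNReal.mul_lt_top ENNReal.ofReal_lt_top ENNReal.ofReal_lt_top
  have hp2 : b * (s - (∫ y, R y ∂(volume.restrict (Ico c 1))))
      ≤ ∫ y, (1 - R y) ∂(Q.restrict (Ico c 1)) := by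
    have hmono : (∫ y, (1 - R y) ∂((ENNReal.ofReal b • volume).restrict (Ico c 1)))
        ≤ ∫ y, (1 - R y) ∂(Q.restrict (Ico c 1)) :=
      integral_mono_measure hB (Eventually.of_forall (fun y => by simp only [Pi.zero_apply]; linarith [(hR01 y).2])) (hI1R _)
    have heq : (∫ y, (1 - R y) ∂((ENNReal.ofReal b • volume).restrict (Ico c 1)))
        = b * ∫ y, (1 - R y) ∂(volume.restrict (Ico c 1)) := by
      rw [Measure.restrict_smul, integral_smul_measure, ENNReal.toReal_ofReal hb, smul_eq_mul]
    have hval : (∫ y, (1 - R y) ∂(volume.restrict (Ico c 1)))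
        = s - ∫ y, R y ∂(volume.restrict (Ico c 1)) := by
      rw [integral_sub (integrable_const 1) (hIR _), integral_const, measureReal_def, Measure.restrict_apply_univ,
        Real.volume_Ico, smul_eq_mul, mul_one, ENNReal.toReal_ofReal (by linarith)]
      norm_num [hcdef]
    calc b * (s - (∫ y, R y ∂(volume.restrict (Ico c 1))))
        = b * ∫ y, (1 - R y) ∂(volume.restrict (Ico c 1)) := by rw [hval]
      _ = _ := heq.symm
      _ ≤ _ := hmono
  -- piece 3
  have hp3 : 0 ≤ ∫ y, (1 - R y) ∂(Q.restrict {1}) :=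
    integral_nonneg (fun y => by simp only [Pi.zero_apply]; linarith [(hR01 y).2])
  rw [hβdec, htdec]
  linarith

/-- if `f` is a trade-off function, `P` is the uniform distribution
on `[0,1]` and `Q` is the distribution on `[0,1]` with CDF `F_Q(x) = f(1-x)` on
`[0,1)` and an atom of mass `1 - f 0` at `1`, then `T_{P,Q} = f`. -/
theorem base_distribution_pair_tradeoff
    (f : ℝ → ℝ)
    (hconv : ConvexOn ℝ (Icc (0:ℝ) 1) f)
    (hcont : ContinuousOn f (Icc (0:ℝ) 1))
    (hanti : AntitoneOn f (Icc (0:ℝ) 1))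
    (hrange : ∀ x ∈ Icc (0:ℝ) 1, f x ∈ Icc (0:ℝ) 1)
    (hle : ∀ x ∈ Icc (0:ℝ) 1, f x ≤ 1 - x)
    (P Q : Measure ℝ) [IsProbabilityMeasure Q]
    (hP : P = volume.restrict (Icc (0:ℝ) 1))
    (hQsupp : Q (Icc (0:ℝ) 1)ᶜ = 0)
    (hQcdf : ∀ x ∈ Ico (0:ℝ) 1, (Q (Iic x)).toReal = f (1 - x))
    (hQatom : (Q {1}).toReal = 1 - f 0) :
    ∀ α ∈ Icc (0:ℝ) 1, tradeOff P Q α = f α := by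
  subst hP
  intro α hα
  obtain ⟨hα0, hα1⟩ := hα
  have hf1 : f 1 = 0 :=
    le_antisymm (by simpa using hle 1 ⟨zero_le_one, le_rfl⟩) (hrange 1 ⟨zero_le_one, le_rfl⟩).1
  have hf0nn : 0 ≤ f 0 := (hrange 0 ⟨le_rfl, zero_le_one⟩).1
  have hf01 : f 0 ≤ 1 := by simpa using hle 0 ⟨le_rfl, zero_le_one⟩
  have hfnn : ∀ x ∈ Icc (0:ℝ) 1, 0 ≤ f x := fun x hx => (hrange x hx).1
  -- basic facts about Q
  have hQ0 : Q (Iio 0) = 0 := by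
    refine measure_mono_null (fun x hx => ?_) hQsupp
    simp only [mem_Iio] at hx
    simp only [mem_compl_iff, mem_Icc, not_and, not_le]
    intro h; linarith
  have hQoi : Q (Ioi 1) = 0 := by
    refine measure_mono_null (fun x hx => ?_) hQsupp
    simp only [mem_Ioi] at hx
    simp only [mem_compl_iff, mem_Icc, not_and, not_le]
    intro h; linarith
  have hQIic : ∀ x, 0 ≤ x → x < 1 → Q (Iic x) = ENNReal.ofReal (f (1 - x)) := by
    intro x h1 h2
    rw [← hQcdf x ⟨h1, h2⟩, ENNReal.ofReal_toReal (measure_ne_top Q _)]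
  have hQ1 : Q {1} = ENNReal.ofReal (1 - f 0) := by
    rw [← hQatom, ENNReal.ofReal_toReal (measure_ne_top Q _)]
  have hQIio1 : Q (Iio 1) = ENNReal.ofReal (f 0) := by
    have hIci : Q (Ici (1:ℝ)) = ENNReal.ofReal (1 - f 0) := by
      have hset : Ici (1:ℝ) = {1} ∪ Ioi 1 := by
        ext x; simp only [mem_Ici, mem_union, mem_singleton_iff, mem_Ioi]
        constructor
        · intro h; rcases eq_or_lt_of_le h with h' | h'
          · exact Or.inl h'.symm
          · exact Or.inr h'
        · rintro (h | h)
          · exact h.ge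
          · exact h.le
      rw [hset, measure_union (by simp) measurableSet_Ioi, hQ1, hQoi, add_zero]
    have hcompl : Q (Iio 1) + Q (Ici 1) = 1 := by
      rw [← measure_union (Iio_disjoint_Ici le_rfl) measurableSet_Ici, Iio_union_Ici, measure_univ]
    rw [hIci] at hcompl
    have hone : ENNReal.ofReal (f 0) + ENNReal.ofReal (1 - f 0) = 1 := by
      rw [← ENNReal.ofReal_add hf0nn (by linarith)]
      norm_num
    rw [← hone] at hcompl
    exact (ENNReal.add_left_inj ENNReal.ofReal_ne_top).mp hcompl
  have hQsing : ∀ x, 0 < x → x < 1 → Q {x} = 0 := by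
    intro x hx0 hx1
    have hbound : ∀ u, 0 ≤ u → u < x → (Q {x}).toReal ≤ f (1 - x) - f (1 - u) := by
      intro u h0 h1
      have h1u : f (1 - u) ≤ f (1 - x) :=
        hanti ⟨by linarith, by linarith⟩ ⟨by linarith, by linarith⟩ (by linarith)
      have hIoc : Q (Ioc u x) = ENNReal.ofReal (f (1 - x) - f (1 - u)) := by
        have hu : Q (Iic u ∪ Ioc u x) = Q (Iic u) + Q (Ioc u x) :=
          measure_union (Iic_disjoint_Ioc le_rfl) measurableSet_Ioc
        rw [Iic_union_Ioc_eq_Iic h1.le, hQIic u h0 (lt_trans h1 hx1),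
          hQIic x (le_trans h0 h1.le) hx1] at hu
        have hsum : ENNReal.ofReal (f (1 - x))
            = ENNReal.ofReal (f (1 - u)) + ENNReal.ofReal (f (1 - x) - f (1 - u)) := by
          rw [← ENNReal.ofReal_add (hfnn _ ⟨by linarith, by linarith⟩) (by linarith)]
          ring_nf
        rw [hsum] at hu
        exact ((ENNReal.add_right_inj ENNReal.ofReal_ne_top).mp hu).symm
      calc (Q {x}).toReal ≤ (Q (Ioc u x)).toReal :=
            ENNReal.toReal_mono (measure_ne_top Q _)
              (measure_mono (fun y hy => by
                simp only [mem_singleton_iff] at hy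
                subst hy; exact ⟨h1, le_rfl⟩))
        _ = f (1 - x) - f (1 - u) := by rw [hIoc, ENNReal.toReal_ofReal (by linarith)]
    have hQxnn : 0 ≤ (Q {x}).toReal := ENNReal.toReal_nonneg
    have heps : ∀ ε, 0 < ε → (Q {x}).toReal ≤ ε := by
      intro ε hε
      have hcx : ContinuousWithinAt f (Icc 0 1) (1 - x) :=
        hcont (1 - x) ⟨by linarith, by linarith⟩
      rw [Metric.continuousWithinAt_iff] at hcx
      obtain ⟨δ, hδ, hδ'⟩ := hcx ε hε
      set u := max (x - δ/2) (x/2) with hu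
      have hu0 : 0 < u := lt_of_lt_of_le (by linarith) (le_max_right _ _)
      have hux : u < x := max_lt (by linarith) (by linarith)
      have huge : x - δ/2 ≤ u := le_max_left _ _
      have hdist : dist (1 - u) (1 - x) < δ := by
        rw [Real.dist_eq, abs_of_nonneg (by linarith)]
        linarith
      have hmem : (1 - u) ∈ Icc (0:ℝ) 1 := ⟨by linarith, by linarith⟩
      have hd := hδ' hmem hdist
      rw [Real.dist_eq] at hd
      have habs : f (1 - x) - f (1 - u) < ε := by
        rcases abs_lt.mp hd with ⟨ha, hb⟩
        linarith
      linarith [hbound u hu0.le hux]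
    have hz : (Q {x}).toReal = 0 := by
      by_contra h
      have hpos : 0 < (Q {x}).toReal := lt_of_le_of_ne hQxnn (Ne.symm h)
      linarith [heps ((Q {x}).toReal / 2) (by linarith)]
    rcases (ENNReal.toReal_eq_zero_iff _).mp hz with h | h
    · exact h
    · exact absurd h (measure_ne_top Q _)
  have hQIio : ∀ x, 0 < x → x ≤ 1 → Q (Iio x) = ENNReal.ofReal (f (1 - x)) := by
    intro x h0 h1
    rcases eq_or_lt_of_le h1 with rfl | h1
    · rw [hQIio1]; norm_num
    · have hu : Q (Iio x ∪ {x}) = Q (Iio x) + Q {x} :=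
        measure_union (by simp) (measurableSet_singleton x)
      rw [Iio_union_right, hQsing x h0 h1, add_zero] at hu
      rw [← hu, hQIic x h0.le h1]
  -- the witness test
  set Rw : ℝ → ℝ := (Ici (1 - α)).indicator (fun _ => (1:ℝ)) with hRw
  have hRwmeas : Measurable Rw := measurable_const.indicator measurableSet_Ici
  have hRw01 : ∀ y, Rw y ∈ Icc (0:ℝ) 1 := by
    intro y
    by_cases h : y ∈ Ici (1 - α)
    · simp [hRw, indicator_of_mem h]
    · simp [hRw, indicator_of_notMem h]
  have hIciIcc : Ici (1 - α) ∩ Icc 0 1 = Icc (1 - α) 1 := by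
    ext z
    simp only [mem_inter_iff, mem_Ici, mem_Icc]
    constructor
    · rintro ⟨h1, h2, h3⟩; exact ⟨h1, h3⟩
    · rintro ⟨h1, h2⟩; exact ⟨h1, by linarith, h2⟩
  have hintRw : (∫ y, Rw y ∂(volume.restrict (Icc (0:ℝ) 1))) = α := by
    rw [hRw, integral_indicator_const (1:ℝ) measurableSet_Ici, smul_eq_mul, mul_one, measureReal_def,
      Measure.restrict_apply measurableSet_Ici, hIciIcc, Real.volume_Icc]
    rw [show (1:ℝ) - (1 - α) = α by ring, ENNReal.toReal_ofReal hα0]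
  have hfun : (fun y => 1 - Rw y) = (Iio (1 - α)).indicator (fun _ => (1:ℝ)) := by
    funext y
    simp only [hRw, indicator_apply, mem_Ici, mem_Iio]
    by_cases h : 1 - α ≤ y
    · rw [if_pos h, if_neg (not_lt.mpr h)]; ring
    · rw [if_neg h, if_pos (not_le.mp h)]; ring
  have hintRw2 : (∫ y, (1 - Rw y) ∂Q) = f α := by
    rw [hfun, integral_indicator_const (1:ℝ) measurableSet_Iio, smul_eq_mul, mul_one]
    rcases eq_or_lt_of_le hα1 with rfl | hα1'
    · rw [show (1:ℝ) - 1 = 0 by ring, measureReal_def, hQ0]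
      simp [hf1]
    · rw [measureReal_def, hQIio (1 - α) (by linarith) (by linarith), show (1:ℝ) - (1 - α) = α by ring,
        ENNReal.toReal_ofReal (hfnn α ⟨hα0, hα1⟩)]
  have hwit : f α ∈ {β : ℝ | ∃ R : ℝ → ℝ, Measurable R ∧
      (∀ y, R y ∈ Icc (0:ℝ) 1) ∧ (∫ y, R y ∂(volume.restrict (Icc (0:ℝ) 1))) ≤ α ∧
      β = ∫ y, (1 - R y) ∂Q} :=
    ⟨Rw, hRwmeas, hRw01, le_of_eq hintRw, hintRw2.symm⟩
  have hbdd : BddBelow {β : ℝ | ∃ R : ℝ → ℝ, Measurable R ∧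
      (∀ y, R y ∈ Icc (0:ℝ) 1) ∧ (∫ y, R y ∂(volume.restrict (Icc (0:ℝ) 1))) ≤ α ∧
      β = ∫ y, (1 - R y) ∂Q} := by
    refine ⟨0, fun β hβ => ?_⟩
    obtain ⟨R, _, hR01, _, hβeq⟩ := hβ
    rw [hβeq]
    exact integral_nonneg (fun y => by simp only [Pi.zero_apply]; linarith [(hR01 y).2])
  refine le_antisymm (csInf_le hbdd hwit) ?_
  refine le_csInf ⟨f α, hwit⟩ (fun β hβ => ?_)
  obtain ⟨R, hRm, hR01, htle, hβeq⟩ := hβ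
  have hkey : ∀ s, s ∈ Ioo (0:ℝ) 1 → ∃ k, k ≤ 0 ∧
      (∀ u, 0 ≤ u → u < s → (f s - f u) / (s - u) ≤ k) ∧ f s + k * (α - s) ≤ β := by
    intro s hs
    obtain ⟨k, hk0, hmem, hl1, hl2⟩ := exists_subgrad f hconv hanti hs
    refine ⟨k, hk0, hmem, ?_⟩
    have hcore := core_bound Q f hcont hfnn hf1 hQsupp hQIic hQIio hQ0 R hRm hR01
      s (-k) hs (by linarith) hl1 hl2
    rw [← hβeq] at hcore
    have hmul : k * α ≤ k * (∫ y, R y ∂(volume.restrict (Icc (0:ℝ) 1))) :=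
      mul_le_mul_of_nonpos_left htle hk0
    nlinarith [hcore]
  rcases eq_or_lt_of_le hα0 with hα0' | hα0'
  · -- α = 0
    have hα' : α = 0 := hα0'.symm
    subst hα'
    have hsle : ∀ s ∈ Ioo (0:ℝ) 1, f s ≤ β := by
      intro s hs
      obtain ⟨k, hk0, _, hb⟩ := hkey s hs
      have h1 : 0 ≤ k * (0 - s) := by nlinarith [mul_nonneg (neg_nonneg.mpr hk0) hs.1.le]
      linarith
    have hne : (𝓝[Ioo (0:ℝ) 1] 0).NeBot :=
      mem_closure_iff_nhdsWithin_neBot.mp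
        (by rw [closure_Ioo (zero_ne_one)]; exact ⟨le_rfl, zero_le_one⟩)
    have htends : Tendsto f (𝓝[Ioo (0:ℝ) 1] 0) (𝓝 (f 0)) :=
      (hcont 0 ⟨le_rfl, zero_le_one⟩).mono Ioo_subset_Icc_self
    exact le_of_tendsto htends (eventually_mem_nhdsWithin.mono hsle)
  · rcases eq_or_lt_of_le hα1 with hα1' | hα1'
    · -- α = 1
      subst hα1'
      have hsle : ∀ s ∈ Ioo (1/2 : ℝ) 1, f s - (1 - s)/(s - 1/2) ≤ β := by
        intro s hs
        obtain ⟨hs2, hs1⟩ := hs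
        obtain ⟨k, hk0, hmem, hb⟩ := hkey s ⟨by linarith, hs1⟩
        have hden : (0:ℝ) < s - 1/2 := by linarith
        have hm := hmem (1/2) (by norm_num) hs2
        have hfs := hrange s ⟨by linarith, hs1.le⟩
        have hfh := hrange (1/2) ⟨by norm_num, by norm_num⟩
        have hlb : (-1) / (s - 1/2) ≤ (f s - f (1/2)) / (s - 1/2) :=
          (div_le_div_iff_of_pos_right hden).mpr (by linarith [hfs.1, hfh.2])
        have hk : (-1) / (s - 1/2) ≤ k := le_trans hlb hm
        have h2 : ((-1) / (s - 1/2)) * (1 - s) ≤ k * (1 - s) :=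
          mul_le_mul_of_nonneg_right hk (by linarith)
        have h3 : ((-1) / (s - 1/2)) * (1 - s) = -((1 - s)/(s - 1/2)) := by ring
        linarith [hb]
      have hne : (𝓝[Ioo (1/2:ℝ) 1] 1).NeBot :=
        mem_closure_iff_nhdsWithin_neBot.mp
          (by rw [closure_Ioo (by norm_num : (1/2:ℝ) ≠ 1)]; exact ⟨by norm_num, le_rfl⟩)
      have ht1 : Tendsto (fun s => f s - (1 - s)/(s - 1/2)) (𝓝[Ioo (1/2:ℝ) 1] 1)
          (𝓝 (f 1 - (1 - 1)/(1 - 1/2))) := by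
        apply Tendsto.sub
        · exact (hcont 1 ⟨zero_le_one, le_rfl⟩).mono (fun x hx => ⟨by linarith [hx.1], hx.2.le⟩)
        · apply Tendsto.div
          · exact ((continuous_const.sub continuous_id).tendsto 1).mono_left nhdsWithin_le_nhds
          · exact ((continuous_id.sub continuous_const).tendsto 1).mono_left nhdsWithin_le_nhds
          · norm_num
      have hfin := le_of_tendsto ht1 (eventually_mem_nhdsWithin.mono hsle)
      norm_num at hfin
      convert hfin using 1
    · -- 0 < α < 1
      obtain ⟨k, hk0, _, hb⟩ := hkey α ⟨hα0', hα1'⟩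
      simpa using hb
end

section
/- For a trade-off function f with f(0) ≥ 1 − δ, the quantity ε = inf{ a ≥ 0 : f(x) ≥ 1 − δ − e^a x for all x ∈ [0,1] } satisfies: a mechanism that is f-DP is also (ε, δ)-DP. In particular, if f(x) ≥ 1 − δ − e^a x for all x ∈ [0,1], then f ≥ f_{a,δ} pointwise on the region where f is symmetric, and hence any f-DP mechanism is (a,δ)-DP. -/
open MeasureTheory Set

lemma tradeOff_le_indicator {Y : Type*} [MeasurableSpace Y] (P Q : Measure Y)
    [IsProbabilityMeasure P] [IsProbabilityMeasure Q] (S : Set Y) (hS : MeasurableSet S) :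
    tradeOff P Q (P S).toReal ≤ 1 - (Q S).toReal := by
  apply csInf_le
  · refine ⟨0, ?_⟩
    rintro β ⟨R, hR, hR01, hint, rfl⟩
    exact integral_nonneg fun y => sub_nonneg.mpr (hR01 y).2
  · refine ⟨S.indicator (fun _ => 1), measurable_const.indicator hS, ?_, ?_, ?_⟩
    · intro y
      by_cases h : y ∈ S <;> simp [Set.indicator_apply, h]
    · rw [integral_indicator_const (1:ℝ) hS]; simp [Measure.real]
    · have hi : Integrable (S.indicator (fun _ => (1:ℝ))) Q :=
        (integrable_const 1).indicator hS
      rw [integral_sub (integrable_const 1) hi, integral_indicator_const (1:ℝ) hS]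
      simp [Measure.real]

/-- for a symmetric trade-off function `f` with `f 0 ≥ 1 - δ`, an
`f`-DP mechanism is `(ε,δ)`-DP for `ε = inf {a ≥ 0 : ∀ x ∈ [0,1], f x ≥ 1 - δ - e^a x}`;
in particular, if `f x ≥ 1 - δ - e^a x` on `[0,1]` for some `a ≥ 0`, then any
`f`-DP mechanism is `(a,δ)`-DP. -/
theorem fDP_implies_epsDeltaDP
    {X Y : Type*} [MeasurableSpace Y] (M : X → Measure Y)
    (hM : ∀ x, IsProbabilityMeasure (M x))
    (adj : X → X → Prop) (hadj : ∀ x x', adj x x' → adj x' x)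
    (δ : ℝ) (hδ0 : 0 ≤ δ) (hδ1 : δ ≤ 1)
    (f : ℝ → ℝ)
    (hconv : ConvexOn ℝ (Icc (0:ℝ) 1) f)
    (hcont : ContinuousOn f (Icc (0:ℝ) 1))
    (hanti : AntitoneOn f (Icc (0:ℝ) 1))
    (hrange : ∀ x ∈ Icc (0:ℝ) 1, f x ∈ Icc (0:ℝ) 1)
    (hsym : ∀ x ∈ Icc (0:ℝ) 1, f (f x) = x)
    (hf0 : 1 - δ ≤ f 0)
    (hfdp : IsFDP M adj f)
    (hne : {a : ℝ | 0 ≤ a ∧ ∀ x ∈ Icc (0:ℝ) 1, 1 - δ - Real.exp a * x ≤ f x}.Nonempty) :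
    (∀ a : ℝ, 0 ≤ a → (∀ x ∈ Icc (0:ℝ) 1, 1 - δ - Real.exp a * x ≤ f x) →
       IsEpsDeltaDP M adj a δ) ∧
    IsEpsDeltaDP M adj
      (sInf {a : ℝ | 0 ≤ a ∧ ∀ x ∈ Icc (0:ℝ) 1, 1 - δ - Real.exp a * x ≤ f x}) δ := by
  
  have key : ∀ a : ℝ, 0 ≤ a → (∀ x ∈ Icc (0:ℝ) 1, 1 - δ - Real.exp a * x ≤ f x) →
      IsEpsDeltaDP M adj a δ := by
    intro a ha hfa x x' hxx' S hS
    have hPx := hM x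
    have hPx' := hM x'
    have hα : (M x' S).toReal ∈ Icc (0:ℝ) 1 := by
      constructor
      · exact ENNReal.toReal_nonneg
      · have h1 : M x' S ≤ 1 := prob_le_one
        have := ENNReal.toReal_mono (by norm_num) h1
        simpa using this
    have h1 := hfdp x' x (hadj _ _ hxx') _ hα
    have h2 := tradeOff_le_indicator (M x') (M x) S hS
    have h3 := hfa _ hα
    linarith
  refine ⟨key, ?_⟩
  set A := {a : ℝ | 0 ≤ a ∧ ∀ x ∈ Icc (0:ℝ) 1, 1 - δ - Real.exp a * x ≤ f x} with hA
  have hclosed : IsClosed A := by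
    have : A = Ici (0:ℝ) ∩ ⋂ x ∈ Icc (0:ℝ) 1, {a : ℝ | 1 - δ - Real.exp a * x ≤ f x} := by
      ext a; simp [hA, Set.mem_iInter, and_comm]
    rw [this]
    refine isClosed_Ici.inter (isClosed_biInter fun x hx => ?_)
    exact isClosed_le (continuous_const.sub (Real.continuous_exp.mul continuous_const))
      continuous_const
  have hbdd : BddBelow A := ⟨0, fun a ha => ha.1⟩
  have hmem := hclosed.csInf_mem hne hbdd
  exact key _ hmem.1 hmem.2
end
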